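/- arXiv:2006.01739 — 2 statements merged into one kernel-verified Lean document; each statement's English description precedes it below -/
import Mathlib

section
/- Let a_1,…,a_n be nonzero vectors in ℂ^d, let ω_1,…,ω_n ∈ (0,2), and let R = P_{a_n}^{ω_n} ∘ ⋯ ∘ P_{a_1}^{ω_1} be the composition of the corresponding relaxed projections. If x ∈ ℂ^d satisfies ‖R x‖ = ‖x‖, then ⟨x, a_j⟩ = 0 for every j = 1,…,n, and consequently R x = x. -/
/-!
Expanding the square gives `‖P_a^ω y‖² = ‖y‖² - ω(2 - ω)|⟨a, y⟩|²/‖a‖²`, so for `ω ∈ (0, 2)` each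
relaxed projection is nonexpansive and preserves the norm of `y` only if `⟨a, y⟩ = 0`, in which case
it fixes `y`. Along the composition the norms can therefore only decrease; if `‖R x‖ = ‖x‖`, the
first factor preserves the norm of `x`, hence fixes `x`, and induction on the number of factors
shows that every factor fixes `x`.
-/

/-- The relaxed projection `P_a^ω x = x - ω (⟨x,a⟩/‖a‖²) a` associated to a vector `a ∈ ℂ^d`
and a real relaxation parameter `ω`. -/
noncomputable def relaxProj {d : ℕ} (a : EuclideanSpace ℂ (Fin d)) (ω : ℝ)
    (x : EuclideanSpace ℂ (Fin d)) : EuclideanSpace ℂ (Fin d) :=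
  x - ((ω : ℂ) * ((inner ℂ a x : ℂ) / (‖a‖ : ℂ) ^ 2)) • a

namespace List

variable {ι E : Type*} [Norm E] {f : ι → E → E}

theorem norm_foldl_le (hf : ∀ i y, ‖f i y‖ ≤ ‖y‖) (l : List ι) (x : E) :
    ‖l.foldl (fun y i => f i y) x‖ ≤ ‖x‖ := by
  induction l generalizing x with
  | nil => rfl
  | cons i l ih => exact (ih (f i x)).trans (hf i x)

theorem forall_apply_eq_self_of_norm_foldl_eq (hf : ∀ i y, ‖f i y‖ ≤ ‖y‖)
    (hfix : ∀ i y, ‖f i y‖ = ‖y‖ → f i y = y) {l : List ι} {x : E}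
    (h : ‖l.foldl (fun y i => f i y) x‖ = ‖x‖) : ∀ i ∈ l, f i x = x := by
  induction l with
  | nil => simp
  | cons i l ih =>
    have hi : f i x = x := hfix i x <|
      le_antisymm (hf i x) (h ▸ norm_foldl_le hf l (f i x))
    rw [foldl_cons, hi] at h
    intro j hj
    rcases mem_cons.1 hj with rfl | hj
    exacts [hi, ih h j hj]

end List

open RCLike in
theorem norm_sub_relaxed_smul_sq {𝕜 E : Type*} [RCLike 𝕜] [NormedAddCommGroup E]
    [InnerProductSpace 𝕜 E] (a x : E) (ω : ℝ) :
    ‖x - ((ω : 𝕜) * (inner 𝕜 a x / (‖a‖ : 𝕜) ^ 2)) • a‖ ^ 2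
      = ‖x‖ ^ 2 - ω * (2 - ω) * ‖inner 𝕜 a x‖ ^ 2 / ‖a‖ ^ 2 := by
  rcases eq_or_ne a 0 with rfl | ha
  · simp
  have hna : ‖a‖ ≠ 0 := norm_ne_zero_iff.mpr ha
  have hre : re (inner 𝕜 x (((ω : 𝕜) * (inner 𝕜 a x / (‖a‖ : 𝕜) ^ 2)) • a))
      = ω * ‖inner 𝕜 a x‖ ^ 2 / ‖a‖ ^ 2 := by
    rw [inner_smul_right, ← inner_conj_symm (𝕜 := 𝕜) x a, mul_assoc, div_mul_eq_mul_div,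
      RCLike.mul_conj, ← mul_div_assoc]
    norm_cast
  rw [norm_sub_sq (𝕜 := 𝕜), hre, norm_smul, norm_mul, norm_div, norm_pow, RCLike.norm_ofReal,
    RCLike.norm_ofReal, abs_norm]
  field_simp
  rw [sq_abs]
  ring

section relaxProj

variable {d : ℕ} {a : EuclideanSpace ℂ (Fin d)} {ω : ℝ} {y : EuclideanSpace ℂ (Fin d)}

theorem norm_relaxProj_sq (a : EuclideanSpace ℂ (Fin d)) (ω : ℝ) (y : EuclideanSpace ℂ (Fin d)) :
    ‖relaxProj a ω y‖ ^ 2 = ‖y‖ ^ 2 - ω * (2 - ω) * ‖inner ℂ a y‖ ^ 2 / ‖a‖ ^ 2 :=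
  norm_sub_relaxed_smul_sq a y ω

theorem norm_relaxProj_le (a : EuclideanSpace ℂ (Fin d)) (hω : ω ∈ Set.Icc (0 : ℝ) 2)
    (y : EuclideanSpace ℂ (Fin d)) : ‖relaxProj a ω y‖ ≤ ‖y‖ := by
  have hdrop : 0 ≤ ω * (2 - ω) * ‖inner ℂ a y‖ ^ 2 / ‖a‖ ^ 2 := by
    have := hω.1
    have := sub_nonneg.2 hω.2
    positivity
  refine (sq_le_sq₀ (norm_nonneg _) (norm_nonneg _)).1 ?_
  rw [norm_relaxProj_sq]
  linarith

theorem inner_eq_zero_of_norm_relaxProj_eq (ha : a ≠ 0) (hω : ω ∈ Set.Ioo (0 : ℝ) 2)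
    (h : ‖relaxProj a ω y‖ = ‖y‖) : inner ℂ a y = 0 := by
  have hdrop : ω * (2 - ω) * ‖inner ℂ a y‖ ^ 2 / ‖a‖ ^ 2 = 0 := by
    have := norm_relaxProj_sq a ω y
    rw [h] at this
    linarith
  have hω' : ω * (2 - ω) ≠ 0 := (mul_pos hω.1 (sub_pos.2 hω.2)).ne'
  simpa [hω', ha] using hdrop

theorem relaxProj_eq_self_of_inner_eq_zero (h : inner ℂ a y = 0) : relaxProj a ω y = y := by
  simp [relaxProj, h]

end relaxProj

/-- If `R = P_{a_n}^{ω_n} ∘ ⋯ ∘ P_{a_1}^{ω_1}` with all `ω_j ∈ (0,2)` and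
`‖R x‖ = ‖x‖`, then `⟨x, a_j⟩ = 0` for every `j`, and consequently `R x = x`. -/
theorem stmt_5 {d n : ℕ} (a : Fin n → EuclideanSpace ℂ (Fin d)) (ha : ∀ i, a i ≠ 0)
    (ω : Fin n → ℝ) (hω : ∀ i, ω i ∈ Set.Ioo (0 : ℝ) 2)
    (R : EuclideanSpace ℂ (Fin d) → EuclideanSpace ℂ (Fin d))
    (hR : ∀ x, R x = (List.finRange n).foldl (fun y i => relaxProj (a i) (ω i) y) x)
    (x : EuclideanSpace ℂ (Fin d)) (hx : ‖R x‖ = ‖x‖) :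
    (∀ j, (inner ℂ (a j) x : ℂ) = 0) ∧ R x = x := by
  have hfix : ∀ j, relaxProj (a j) (ω j) x = x := fun j =>
    List.forall_apply_eq_self_of_norm_foldl_eq
      (fun i => norm_relaxProj_le (a i) (Set.Ioo_subset_Icc_self (hω i)))
      (fun i _ h => relaxProj_eq_self_of_inner_eq_zero
        (inner_eq_zero_of_norm_relaxProj_eq (ha i) (hω i) h))
      (hR x ▸ hx) j (List.mem_finRange j)
  refine ⟨fun j => inner_eq_zero_of_norm_relaxProj_eq (ha j) (hω j) (congrArg norm (hfix j)), ?_⟩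
  rw [hR x]
  exact List.foldl_fixed' hfix _
end

section
/- Let A be an m×d complex matrix with nonzero rows a_1*,…,a_m* and let b ∈ ℂ^m (the system A x = b need not be consistent). For each ℓ = 1,…,t let w_ℓ > 0 with Σ_{ℓ=1}^{t} w_ℓ = 1 and let (v_{ℓ,1},…,v_{ℓ,n_ℓ}) be a list of row indices such that every index in {1,…,m} occurs in at least one list; let ω_v be a real relaxation parameter for each row index v. Define Q_v x = x + ω_v((b_v − ⟨x, a_v⟩)/‖a_v‖²) a_v, P_v x = x − ω_v(⟨x, a_v⟩/‖a_v‖²) a_v, Q x = Σ_{ℓ=1}^{t} w_ℓ (Q_{v_{ℓ,n_ℓ}} ∘ ⋯ ∘ Q_{v_{ℓ,1}})(x), and P x = Σ_{ℓ=1}^{t} w_ℓ (P_{v_{ℓ,n_ℓ}} ∘ ⋯ ∘ P_{v_{ℓ,1}})(x), and let h = Q(0), so that Q x = P x + h for all x. Assume ‖P x‖ ≤ ‖x‖ for all x and that ‖P x‖ = ‖x‖ implies A x = 0. Then h lies in the range of A*, the series y₀ = Σ_{j=0}^{∞} P^j h converges, and for every initial vector x⁰ ∈ ℂ^d the iterates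 x^{n+1} = Q x^n converge to y₀ + Π x⁰, where Π is the orthogonal projection onto the null space {x : A x = 0}. -/
/-!
Write `Q x = P x + h` with `P` linear and let `S` be the span of the rows. Each `P_v` fixes `Sᗮ`
pointwise and maps `S` into itself, hence so does their weighted average `P`; on `S` the two
hypotheses on `P` make it a strict contraction, so by compactness of the unit sphere of `S` its
operator norm there is `< 1`.
Since `h ∈ S`, the series `Σ P^j h` converges, and `x^n = P^n x⁰ + Σ_{j<n} P^j h` where
`P^n x⁰ = P^n (x⁰ - Π x⁰) + Π x⁰ → Π x⁰`.
-/

open Filter Topology Submodule Set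

section Contraction

variable {𝕜 E : Type*} [RCLike 𝕜] [NormedAddCommGroup E]

theorem ContinuousLinearMap.opNorm_lt_one_of_norm_apply_lt [NormedSpace 𝕜 E]
    [FiniteDimensional 𝕜 E] (g : E →L[𝕜] E) (hg : ∀ x, x ≠ 0 → ‖g x‖ < ‖x‖) : ‖g‖ < 1 := by
  have := FiniteDimensional.proper_rclike 𝕜 E
  let := NormedSpace.restrictScalars ℝ 𝕜 E
  rcases subsingleton_or_nontrivial E with _ | _
  · simp [g.opNorm_subsingleton]
  obtain ⟨x₀, hx₀, hmax⟩ := (isCompact_sphere (0 : E) 1).exists_isMaxOn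
    (NormedSpace.sphere_nonempty.2 zero_le_one) (map_continuous g).norm.continuousOn
  have hx₀ : ‖x₀‖ = 1 := by simpa using hx₀
  refine (g.opNorm_le_of_unit_norm (norm_nonneg _) fun x hx => ?_).trans_lt
    (hx₀ ▸ hg x₀ (norm_ne_zero_iff.1 (by simp [hx₀])))
  exact hmax (by simpa using hx)

theorem AddMonoidHom.eq_iterate_add_sum_iterate {M : Type*} [AddCommMonoid M] (T : M →+ M)
    (h : M) {x : ℕ → M} (hx : ∀ n, x (n + 1) = T (x n) + h) (n : ℕ) :
    x n = T^[n] (x 0) + ∑ j ∈ Finset.range n, T^[j] h := by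
  induction n with
  | zero => simp
  | succ n ih =>
    rw [hx, ih, map_add, map_sum, Finset.sum_range_succ', Function.iterate_zero_apply, ← add_assoc]
    simp only [Function.iterate_succ_apply']

variable [InnerProductSpace 𝕜 E]

theorem Submodule.mem_orthogonal_span_range {ι : Type*} {a : ι → E} {x : E}
    (h : ∀ v, inner 𝕜 (a v) x = 0) : x ∈ (span 𝕜 (range a))ᗮ :=
  isOrtho_iff_le.1 (isOrtho_span.2 (by rintro _ ⟨v, rfl⟩ _ rfl; exact h v)).symm
    (mem_span_singleton_self x)

variable [FiniteDimensional 𝕜 E]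

theorem ContinuousLinearMap.tendsto_affine_iterate (T : E →L[𝕜] E) (K : Submodule 𝕜 E)
    (hTK : ∀ x ∈ K, T x ∈ K) (hfix : ∀ x ∈ Kᗮ, T x = x)
    (hlt : ∀ x ∈ K, x ≠ 0 → ‖T x‖ < ‖x‖) {h : E} (hh : h ∈ K) :
    ∃ y₀, HasSum (fun j : ℕ => T^[j] h) y₀ ∧
      ∀ x : ℕ → E, (∀ n, x (n + 1) = T (x n) + h) →
        Tendsto x atTop (𝓝 (y₀ + Kᗮ.starProjection (x 0))) := by
  set g := T.restrict hTK
  have hg : ‖g‖ < 1 := g.opNorm_lt_one_of_norm_apply_lt fun x hx =>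
    hlt x x.2 (by simpa using hx)
  let evalAt (k : K) : (K →L[𝕜] K) →L[𝕜] E := K.subtypeL.comp (.apply 𝕜 K k)
  have hpow (k : K) (n : ℕ) : evalAt k (g ^ n) = T^[n] k :=
    (congrArg Subtype.val (pow_apply_eq_iterate g n k)).trans
      (Function.Semiconj.iterate_right (f := ((↑) : K → E)) (ga := g) (fun _ => rfl) n k)
  obtain ⟨y₀, hy₀⟩ : Summable fun j : ℕ => T^[j] h :=
    ((summable_geometric_of_norm_lt_one hg).mapL (evalAt ⟨h, hh⟩)).congr (hpow ⟨h, hh⟩)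
  refine ⟨y₀, hy₀, fun x hx => ?_⟩
  set p := Kᗮ.starProjection (x 0)
  set k : K := ⟨K.starProjection (x 0), K.starProjection_apply_mem _⟩
  have hdecay : Tendsto (fun n => T^[n] k) atTop (𝓝 0) := by
    simpa only [Function.comp_def, hpow, map_zero] using
      ((evalAt k).continuous.tendsto 0).comp (tendsto_pow_atTop_nhds_zero_of_norm_lt_one hg)
  have hsplit (n : ℕ) : T^[n] (x 0) = T^[n] k + p := by
    rw [← K.starProjection_add_starProjection_orthogonal (x 0), ← pow_apply_eq_iterate, map_add,
      pow_apply_eq_iterate, pow_apply_eq_iterate,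
      Function.iterate_fixed (hfix p (Kᗮ.starProjection_apply_mem _))]
  rw [funext (T.toAddMonoidHom.eq_iterate_add_sum_iterate h hx)]
  simpa [hsplit, add_comm, add_left_comm] using (hdecay.add_const p).add hy₀.tendsto_sum_nat

end Contraction

section Kaczmarz

variable {ι E : Type*} [NormedAddCommGroup E] [InnerProductSpace ℂ E]
  (a : ι → E) (b : ι → ℂ) (ω : ι → ℝ)

/- `kaczmarzStep a b ω y v` is the paper's `Q_v y`, with its arguments in the order `List.foldl`
expects, `kaczmarzProj a ω v` is `P_v`, and `kaczmarzPath a ω [v₁, …, vₙ] = P_{vₙ} ∘ ⋯ ∘ P_{v₁}`. -/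
noncomputable def kaczmarzStep (y : E) (v : ι) : E :=
  y + ((ω v : ℂ) * ((b v - inner ℂ (a v) y) / (‖a v‖ : ℂ) ^ 2)) • a v

noncomputable def kaczmarzProj (v : ι) : E →L[ℂ] E :=
  1 - ((ω v : ℂ) / (‖a v‖ : ℂ) ^ 2) • (innerSL ℂ (a v)).smulRight (a v)

noncomputable def kaczmarzPath : List ι → E →L[ℂ] E
  | [] => 1
  | v :: l => kaczmarzPath l * kaczmarzProj a ω v

variable {a b ω}

theorem kaczmarzProj_apply (v : ι) (y : E) :
    kaczmarzProj a ω v y = y - ((ω v : ℂ) * (inner ℂ (a v) y / (‖a v‖ : ℂ) ^ 2)) • a v := by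
  simp only [kaczmarzProj, sub_apply, one_apply_eq_self, smul_apply,
    ContinuousLinearMap.smulRight_apply, innerSL_apply_apply, smul_smul, div_mul_eq_mul_div,
    mul_div_assoc]

theorem kaczmarzPath_cons (v : ι) (l : List ι) (x : E) :
    kaczmarzPath a ω (v :: l) x = kaczmarzPath a ω l (kaczmarzProj a ω v x) := rfl

theorem kaczmarzPath_apply (l : List ι) (x : E) :
    kaczmarzPath a ω l x = l.foldl (fun y v => kaczmarzProj a ω v y) x := by
  induction l generalizing x with
  | nil => rfl
  | cons v l ih => exact ih _

theorem kaczmarzStep_add (x y : E) (v : ι) :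
    kaczmarzStep a b ω (x + y) v = kaczmarzStep a b ω x v + kaczmarzProj a ω v y := by
  rw [kaczmarzProj_apply, kaczmarzStep, kaczmarzStep, inner_add_right]
  module

theorem foldl_kaczmarzStep_add (l : List ι) (x y : E) :
    l.foldl (kaczmarzStep a b ω) (x + y) =
      l.foldl (kaczmarzStep a b ω) x + kaczmarzPath a ω l y := by
  induction l generalizing x y with
  | nil => rfl
  | cons v l ih => rw [List.foldl_cons, List.foldl_cons, kaczmarzStep_add, ih, kaczmarzPath_cons]

theorem foldl_kaczmarzStep_mem_span (l : List ι) {x : E} (hx : x ∈ span ℂ (range a)) :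
    l.foldl (kaczmarzStep a b ω) x ∈ span ℂ (range a) := by
  induction l generalizing x with
  | nil => exact hx
  | cons v l ih => exact ih (add_mem hx (smul_mem _ _ (subset_span (mem_range_self v))))

theorem kaczmarzPath_mem_span (l : List ι) {x : E} (hx : x ∈ span ℂ (range a)) :
    kaczmarzPath a ω l x ∈ span ℂ (range a) := by
  induction l generalizing x with
  | nil => exact hx
  | cons v l ih =>
    rw [kaczmarzPath_cons, kaczmarzProj_apply]
    exact ih (sub_mem hx (smul_mem _ _ (subset_span (mem_range_self v))))

theorem kaczmarzPath_apply_of_mem_orthogonal (l : List ι) {x : E}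
    (hx : x ∈ (span ℂ (range a))ᗮ) : kaczmarzPath a ω l x = x := by
  induction l with
  | nil => rfl
  | cons v l ih =>
    rw [kaczmarzPath_cons, kaczmarzProj_apply,
      inner_right_of_mem_orthogonal (subset_span (mem_range_self v)) hx]
    simpa using ih

variable {κ : Type*} [Fintype κ]

noncomputable def kaczmarzOp (a : ι → E) (ω : ι → ℝ) (w : κ → ℝ) (paths : κ → List ι) :
    E →L[ℂ] E :=
  ∑ ℓ, (w ℓ : ℂ) • kaczmarzPath a ω (paths ℓ)

variable {w : κ → ℝ} {paths : κ → List ι}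

theorem kaczmarzOp_apply (x : E) :
    kaczmarzOp a ω w paths x = ∑ ℓ, w ℓ • (paths ℓ).foldl
      (fun y v => y - ((ω v : ℂ) * (inner ℂ (a v) y / (‖a v‖ : ℂ) ^ 2)) • a v) x := by
  simp only [kaczmarzOp, sum_apply, smul_apply, kaczmarzPath_apply, kaczmarzProj_apply,
    Complex.coe_smul]

theorem sum_foldl_kaczmarzStep (x : E) :
    ∑ ℓ, w ℓ • (paths ℓ).foldl (kaczmarzStep a b ω) x =
      kaczmarzOp a ω w paths x + ∑ ℓ, w ℓ • (paths ℓ).foldl (kaczmarzStep a b ω) 0 := by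
  simp only [kaczmarzOp, sum_apply, smul_apply, ← Finset.sum_add_distrib]
  refine Finset.sum_congr rfl fun ℓ _ => ?_
  rw [← zero_add x, foldl_kaczmarzStep_add, zero_add, smul_add, add_comm, Complex.coe_smul]

theorem kaczmarzOp_mem_span {x : E} (hx : x ∈ span ℂ (range a)) :
    kaczmarzOp a ω w paths x ∈ span ℂ (range a) := by
  simp only [kaczmarzOp, sum_apply, smul_apply]
  exact sum_mem fun ℓ _ => smul_mem _ _ (kaczmarzPath_mem_span _ hx)

theorem kaczmarzOp_apply_of_mem_orthogonal (hw : ∑ ℓ, w ℓ = 1) {x : E}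
    (hx : x ∈ (span ℂ (range a))ᗮ) : kaczmarzOp a ω w paths x = x := by
  simp only [kaczmarzOp, sum_apply, smul_apply, kaczmarzPath_apply_of_mem_orthogonal _ hx,
    ← Finset.sum_smul, ← Complex.ofReal_sum, hw, Complex.ofReal_one, one_smul]

end Kaczmarz

theorem stmt_14_general {d m t : ℕ} (a : Fin m → EuclideanSpace ℂ (Fin d))
    (b : Fin m → ℂ)
    (w : Fin t → ℝ) (hw1 : ∑ ℓ, w ℓ = 1)
    (paths : Fin t → List (Fin m))
    (ω : Fin m → ℝ)
    (Q P : EuclideanSpace ℂ (Fin d) → EuclideanSpace ℂ (Fin d))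
    (hQ : ∀ x, Q x = ∑ ℓ, w ℓ • (paths ℓ).foldl
      (fun y v => y + ((ω v : ℂ) * ((b v - (inner ℂ (a v) y : ℂ)) / (‖a v‖ : ℂ) ^ 2)) • a v) x)
    (hP : ∀ x, P x = ∑ ℓ, w ℓ • (paths ℓ).foldl
      (fun y v => y - ((ω v : ℂ) * ((inner ℂ (a v) y : ℂ) / (‖a v‖ : ℂ) ^ 2)) • a v) x)
    (hPcon : ∀ x, ‖P x‖ ≤ ‖x‖)
    (hPstrict : ∀ x, ‖P x‖ = ‖x‖ → ∀ v, (inner ℂ (a v) x : ℂ) = 0) :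
    Q 0 ∈ Submodule.span ℂ (Set.range a) ∧
    ∃ y0 : EuclideanSpace ℂ (Fin d),
      HasSum (fun j : ℕ => P^[j] (Q 0)) y0 ∧
      ∀ (x0 : EuclideanSpace ℂ (Fin d)) (xseq : ℕ → EuclideanSpace ℂ (Fin d)),
        xseq 0 = x0 → (∀ n, xseq (n + 1) = Q (xseq n)) →
        Filter.Tendsto xseq Filter.atTop
          (nhds (y0 + (Submodule.orthogonalProjection (Submodule.span ℂ (Set.range a))ᗮ x0 :
            EuclideanSpace ℂ (Fin d)))) := by
  set T := kaczmarzOp a ω w paths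
  obtain rfl : P = T := funext fun x => (hP x).trans (kaczmarzOp_apply x).symm
  replace hQ : ∀ x, Q x = ∑ ℓ, w ℓ • (paths ℓ).foldl (kaczmarzStep a b ω) x := hQ
  have hQ0 : Q 0 ∈ span ℂ (range a) := by
    rw [hQ]
    exact sum_mem fun ℓ _ => smul_of_tower_mem _ _ (foldl_kaczmarzStep_mem_span _ (zero_mem _))
  have hlt : ∀ x ∈ span ℂ (range a), x ≠ 0 → ‖T x‖ < ‖x‖ := fun x hx hx0 =>
    (hPcon x).lt_of_ne fun heq => hx0 <| inner_self_eq_zero.1 <|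
      inner_right_of_mem_orthogonal hx (mem_orthogonal_span_range (hPstrict x heq))
  obtain ⟨y₀, hy₀, hlim⟩ := T.tendsto_affine_iterate _ (fun _ => kaczmarzOp_mem_span)
    (fun _ => kaczmarzOp_apply_of_mem_orthogonal hw1) hlt hQ0
  refine ⟨hQ0, y₀, hy₀, fun x0 xseq h0 hrec => h0 ▸ hlim xseq fun n => ?_⟩
  rw [hrec, hQ, hQ, sum_foldl_kaczmarzStep]

/-- For a (possibly inconsistent) system with rows `a_v*` and right-hand side
`b`, with the distributed Kaczmarz operators `Q` (affine) and `P` (linear part), `h = Q 0`,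
under the hypotheses that `P` is a contraction and `‖P x‖ = ‖x‖` forces `A x = 0`: `h` lies in
the range of `A*` (= span of the `a_v`), the series `y₀ = Σ_j P^j h` converges, and for every
initial vector `x⁰` the iterates `x^{n+1} = Q x^n` converge to `y₀ + Π x⁰`, where `Π` is the
orthogonal projection onto the null space `{x : A x = 0}` (= the orthogonal complement of the
span of the `a_v`). -/
theorem stmt_14 {d m t : ℕ} (a : Fin m → EuclideanSpace ℂ (Fin d)) (ha : ∀ v, a v ≠ 0)
    (b : Fin m → ℂ)
    (w : Fin t → ℝ) (hw : ∀ ℓ, 0 < w ℓ) (hw1 : ∑ ℓ, w ℓ = 1)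
    (paths : Fin t → List (Fin m)) (hcover : ∀ j : Fin m, ∃ ℓ, j ∈ paths ℓ)
    (ω : Fin m → ℝ)
    (Q P : EuclideanSpace ℂ (Fin d) → EuclideanSpace ℂ (Fin d))
    (hQ : ∀ x, Q x = ∑ ℓ, w ℓ • (paths ℓ).foldl
      (fun y v => y + ((ω v : ℂ) * ((b v - (inner ℂ (a v) y : ℂ)) / (‖a v‖ : ℂ) ^ 2)) • a v) x)
    (hP : ∀ x, P x = ∑ ℓ, w ℓ • (paths ℓ).foldl
      (fun y v => y - ((ω v : ℂ) * ((inner ℂ (a v) y : ℂ) / (‖a v‖ : ℂ) ^ 2)) • a v) x)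
    (hPcon : ∀ x, ‖P x‖ ≤ ‖x‖)
    (hPstrict : ∀ x, ‖P x‖ = ‖x‖ → ∀ v, (inner ℂ (a v) x : ℂ) = 0) :
    Q 0 ∈ Submodule.span ℂ (Set.range a) ∧
    ∃ y0 : EuclideanSpace ℂ (Fin d),
      HasSum (fun j : ℕ => P^[j] (Q 0)) y0 ∧
      ∀ (x0 : EuclideanSpace ℂ (Fin d)) (xseq : ℕ → EuclideanSpace ℂ (Fin d)),
        xseq 0 = x0 → (∀ n, xseq (n + 1) = Q (xseq n)) →
        Filter.Tendsto xseq Filter.atTop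
          (nhds (y0 + (Submodule.orthogonalProjection (Submodule.span ℂ (Set.range a))ᗮ x0 :
            EuclideanSpace ℂ (Fin d)))) :=
  stmt_14_general a b w hw1 paths ω Q P hQ hP hPcon hPstrict
end
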